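/- For every nonnegative integer m and |q|<1, (-1)^m q^{m(m+1)} Σ_{n=0}^{m} (q^{-2m};q²)_n (q^{2m+2};q²)_{n+2} / (q;q²)_{n+1} = Σ_{n=0}^{m} (-1)^n (1 - q^{4n+4}) q^{3n²+4n+1} Σ_{j=-n-1}^{n} q^{-j(2j+1)}. -/

import Mathlib

/-!
Reflecting the first Pochhammer symbol, `(q^{-2m};q²)_n = ± q^{…} (q^{2(m-n)+2};q²)_n`, turns
the left side into a sum `lhsSum q m` of `lhsTerm q r n` over `r + n = m`. Raising `m` by one
adds `(1 - q^{4m+8})` times a second sum of the same shape, `stepSum q (m + 1)`, so the theorem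
reduces to `stepSum q m = (-1)^m theta q m`, where `theta q m` is the right-hand summand without
its factor `(-1)^m (1 - q^{4m+4})`. Both sides satisfy the recurrence
`x (m+1) = -q^{6m+7} x m + (-1)^{m+1} (q^{m²+3m+2} + q^{m²+5m+5})`: for `theta` the two new
terms are `j = -m-2` and `j = m+1`, for `stepSum` the recurrence telescopes along the
antidiagonal with the certificate `stepCert`.
-/

/-- Finite q-Pochhammer symbol `(a;q)_n`. -/
noncomputable def qp (a q : ℂ) (n : ℕ) : ℂ := ∏ k ∈ Finset.range n, (1 - a * q ^ k)

open Finset Finset.Nat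

theorem qp_succ (a q : ℂ) (n : ℕ) : qp a q (n + 1) = qp a q n * (1 - a * q ^ n) :=
  prod_range_succ _ _

theorem qp_succ' (a q : ℂ) (n : ℕ) : qp a q (n + 1) = (1 - a) * qp (a * q) q n := by
  rw [qp, prod_range_succ', pow_zero, mul_one, mul_comm]
  simp only [qp, pow_succ', mul_assoc]

theorem qp_add (a q : ℂ) (i j : ℕ) : qp a q (i + j) = qp a q i * qp (a * q ^ i) q j := by
  simp only [qp, prod_range_add, mul_assoc, ← pow_add]

theorem qp_pow_inv_mul_pow {p : ℂ} (hp : p ≠ 0) (r n : ℕ) :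
    qp (p ^ (n + r))⁻¹ p n * p ^ (r * n + (n + 1).choose 2) =
      (-1) ^ n * qp (p ^ (r + 1)) p n := by
  induction n with
  | zero => simp [qp]
  | succ n ih =>
    have hshift : (p ^ (n + 1 + r))⁻¹ * p = (p ^ (n + r))⁻¹ := by
      rw [add_right_comm, pow_succ, mul_inv, inv_mul_cancel_right₀ hp]
    have hexp : r * (n + 1) + (n + 1 + 1).choose 2 = r * n + (n + 1).choose 2 + (n + 1 + r) := by
      rw [Nat.choose_succ_succ', Nat.choose_one_right]
      ring
    have hP : (1 - (p ^ (n + 1 + r))⁻¹) * p ^ (n + 1 + r) = p ^ (n + 1 + r) - 1 := by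
      rw [sub_mul, inv_mul_cancel₀ (pow_ne_zero _ hp), one_mul]
    rw [qp_succ', hshift, hexp, pow_add p (r * n + _), qp_succ]
    linear_combination (p ^ (n + 1 + r) - 1) * ih +
      qp (p ^ (n + r))⁻¹ p n * p ^ (r * n + (n + 1).choose 2) * hP

theorem qp_pow_succ' (q : ℂ) {a b : ℕ} (h : a + 2 = b) (n : ℕ) :
    qp (q ^ a) (q ^ 2) (n + 1) = (1 - q ^ a) * qp (q ^ b) (q ^ 2) n := by
  rw [qp_succ', ← pow_add, h]

theorem qp_odd_succ (q : ℂ) (n : ℕ) :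
    qp q (q ^ 2) (n + 1) = qp q (q ^ 2) n * (1 - q ^ (2 * n + 1)) := by
  rw [qp_succ, ← pow_mul, ← pow_succ']

namespace Finset.Nat

variable {M : Type*} [AddCommGroup M]

theorem sum_antidiagonal_sub (H : ℕ → ℕ → M) (m : ℕ) :
    ∑ p ∈ antidiagonal m, (H p.1 (p.2 + 1) - H (p.1 + 1) p.2) = H 0 (m + 1) - H (m + 1) 0 := by
  induction m generalizing H with
  | zero => simp
  | succ m ih =>
    rw [sum_antidiagonal_succ, ih fun r n => H (r + 1) n]
    abel

theorem sum_antidiagonal_eq_of_sub (F H : ℕ → ℕ → M)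
    (hF : ∀ r n, F r (n + 1) = H r (n + 1) - H (r + 1) n) (m : ℕ) :
    ∑ p ∈ antidiagonal m, F p.1 p.2 = F m 0 + H 0 m - H m 0 := by
  cases m with
  | zero => simp
  | succ m =>
    simp only [sum_antidiagonal_succ', hF, sum_antidiagonal_sub]
    abel

end Finset.Nat

variable {q : ℂ}

theorem one_sub_pow_ne_zero_of_norm_lt_one (hq : ‖q‖ < 1) {k : ℕ} (hk : k ≠ 0) :
    1 - q ^ k ≠ 0 := by
  rw [sub_ne_zero, ne_comm]
  intro h
  simpa [← norm_pow, h] using pow_lt_one₀ (norm_nonneg q) hq hk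

theorem qp_ne_zero_of_odd (hodd : ∀ k : ℕ, 1 - q ^ (2 * k + 1) ≠ 0) (n : ℕ) :
    qp q (q ^ 2) n ≠ 0 :=
  prod_ne_zero_iff.2 fun k _ => by simpa [← pow_mul, ← pow_succ'] using hodd k

noncomputable def lhsTerm (q : ℂ) (r n : ℕ) : ℂ :=
  (-1) ^ r * q ^ (r * (r + 1)) * qp (q ^ (2 * r + 2)) (q ^ 2) (2 * n + 2) / qp q (q ^ 2) (n + 1)

noncomputable def stepTerm (q : ℂ) (r n : ℕ) : ℂ :=
  (-1) ^ r * q ^ (r * r) * qp (q ^ (2 * r + 2)) (q ^ 2) (2 * n + 1) /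
    (q ^ r * qp q (q ^ 2) (n + 1))

noncomputable def stepCert (q : ℂ) (r n : ℕ) : ℂ :=
  (-1) ^ (r + 1) * q ^ (r * (r + 1)) * (1 - q ^ (2 * r + 2)) * (1 + q ^ (2 * (r + n) + 3)) *
    (1 - q ^ (4 * n + 2 * r + 4)) * qp (q ^ (2 * r + 4)) (q ^ 2) (2 * n) / qp q (q ^ 2) (n + 1)

theorem lhsTerm_zero_left (n : ℕ) : lhsTerm q 0 n = (1 - q ^ (4 * n + 4)) * stepTerm q 0 n := by
  rw [lhsTerm, stepTerm, qp_succ _ _ (2 * n + 1)]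
  ring

theorem lhsTerm_succ_left (hq0 : q ≠ 0) (r n : ℕ) :
    lhsTerm q (r + 1) n =
      lhsTerm q r n + (1 - q ^ (4 * (r + n) + 8)) * stepTerm q (r + 1) n := by
  rw [lhsTerm, lhsTerm, stepTerm,
    qp_pow_succ' q (a := 2 * r + 2) (b := 2 * (r + 1) + 2) (by ring) (2 * n + 1),
    qp_succ _ _ (2 * n + 1)]
  field_simp
  ring

theorem stepTerm_zero_left (hodd : ∀ k : ℕ, 1 - q ^ (2 * k + 1) ≠ 0) (n : ℕ) :
    stepTerm q 0 (n + 1) = -stepCert q 0 n := by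
  have hD := qp_ne_zero_of_odd hodd (n + 1)
  have hodd_succ := hodd (n + 1)
  rw [stepTerm, stepCert, show 2 * (n + 1) + 1 = 2 * n + 1 + 1 + 1 by ring,
    qp_pow_succ' q (a := 2 * 0 + 2) (b := 4) (by ring), qp_succ _ _ (2 * n + 1),
    qp_succ _ _ (2 * n), qp_odd_succ q (n + 1)]
  field_simp
  ring

theorem stepTerm_succ_left_add (hq0 : q ≠ 0) (hodd : ∀ k : ℕ, 1 - q ^ (2 * k + 1) ≠ 0)
    (r n : ℕ) :
    stepTerm q (r + 1) (n + 1) + q ^ (6 * (r + n + 1) + 7) * stepTerm q r (n + 1) =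
      stepCert q r (n + 1) - stepCert q (r + 1) n := by
  have hD := qp_ne_zero_of_odd hodd (n + 1)
  have hodd_succ := hodd (n + 1)
  rw [stepTerm, stepTerm, stepCert, stepCert,
    show 2 * (n + 1) + 1 = 2 * n + 1 + 1 + 1 by ring, show 2 * (n + 1) = 2 * n + 1 + 1 by ring,
    qp_pow_succ' q (a := 2 * r + 2) (b := 2 * r + 4) (by ring),
    qp_pow_succ' q (a := 2 * (r + 1) + 2) (b := 2 * (r + 1) + 4) (by ring),
    qp_pow_succ' q (a := 2 * r + 4) (b := 2 * (r + 1) + 4) (by ring),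
    qp_succ _ _ (2 * n + 1), qp_succ _ _ (2 * n), qp_odd_succ q (n + 1)]
  field_simp
  ring

theorem stepTerm_succ_left_zero (hq0 : q ≠ 0) (hodd : ∀ k : ℕ, 1 - q ^ (2 * k + 1) ≠ 0)
    (r : ℕ) :
    stepTerm q (r + 1) 0 + q ^ (6 * r + 7) * stepTerm q r 0 =
      (-1) ^ (r + 1) * (q ^ (r ^ 2 + 3 * r + 2) + q ^ (r ^ 2 + 5 * r + 5)) + stepCert q r 0 := by
  have h1 : 1 - q ≠ 0 := by simpa using hodd 0
  simp only [stepTerm, stepCert, mul_zero, zero_add, add_zero, qp, prod_range_one,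
    prod_range_zero, pow_zero, mul_one]
  field_simp
  ring

noncomputable def lhsSum (q : ℂ) (m : ℕ) : ℂ := ∑ p ∈ antidiagonal m, lhsTerm q p.1 p.2

noncomputable def stepSum (q : ℂ) (m : ℕ) : ℂ := ∑ p ∈ antidiagonal m, stepTerm q p.1 p.2

noncomputable def theta (q : ℂ) (n : ℕ) : ℂ :=
  q ^ (3 * n ^ 2 + 4 * n + 1) * ∑ j ∈ Icc (-(n : ℤ) - 1) (n : ℤ), q ^ (-(j * (2 * j + 1)))

theorem lhsSum_succ (hq0 : q ≠ 0) (m : ℕ) :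
    lhsSum q (m + 1) = lhsSum q m + (1 - q ^ (4 * m + 8)) * stepSum q (m + 1) := by
  rw [lhsSum, lhsSum, stepSum, sum_antidiagonal_succ, sum_antidiagonal_succ, lhsTerm_zero_left]
  simp only [lhsTerm_succ_left hq0, sum_add_distrib]
  rw [← sum_antidiagonal_subst
      (f := fun p k => (1 - q ^ (4 * k + 8)) * stepTerm q (p.1 + 1) p.2),
    mul_add (1 - q ^ (4 * m + 8)), mul_sum]
  ring

theorem lhsSum_eq_sum_stepSum (hq0 : q ≠ 0) (m : ℕ) :
    lhsSum q m = ∑ n ∈ range (m + 1), (1 - q ^ (4 * n + 4)) * stepSum q n := by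
  induction m with
  | zero => simp [lhsSum, stepSum, lhsTerm_zero_left]
  | succ m ih =>
    rw [sum_range_succ, lhsSum_succ hq0, ih]
    ring

theorem stepSum_succ (hq0 : q ≠ 0) (hodd : ∀ k : ℕ, 1 - q ^ (2 * k + 1) ≠ 0) (m : ℕ) :
    stepSum q (m + 1) = -(q ^ (6 * m + 7) * stepSum q m) +
      (-1) ^ (m + 1) * (q ^ (m ^ 2 + 3 * m + 2) + q ^ (m ^ 2 + 5 * m + 5)) := by
  have hsum : stepSum q (m + 1) + q ^ (6 * m + 7) * stepSum q m = stepTerm q 0 (m + 1) +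
      ∑ p ∈ antidiagonal m,
        (stepTerm q (p.1 + 1) p.2 + q ^ (6 * (p.1 + p.2) + 7) * stepTerm q p.1 p.2) := by
    rw [stepSum, stepSum, sum_antidiagonal_succ, mul_sum, add_assoc, ← sum_add_distrib,
      sum_antidiagonal_subst
        (f := fun p k => stepTerm q (p.1 + 1) p.2 + q ^ (6 * k + 7) * stepTerm q p.1 p.2)]
  rw [sum_antidiagonal_eq_of_sub
      (fun r n => stepTerm q (r + 1) n + q ^ (6 * (r + n) + 7) * stepTerm q r n) (stepCert q)
      (stepTerm_succ_left_add hq0 hodd), add_zero,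
    stepTerm_succ_left_zero hq0 hodd, stepTerm_zero_left hodd] at hsum
  linear_combination hsum

theorem stepSum_zero (hodd : ∀ k : ℕ, 1 - q ^ (2 * k + 1) ≠ 0) : stepSum q 0 = 1 + q := by
  have h1 : 1 - q ≠ 0 := by simpa using hodd 0
  simp only [stepSum, antidiagonal_zero, sum_singleton, stepTerm, qp, mul_zero, zero_add,
    range_one, prod_singleton]
  field_simp
  ring

theorem theta_zero (hq0 : q ≠ 0) : theta q 0 = 1 + q := by
  rw [theta, show Icc (-((0 : ℕ) : ℤ) - 1) ((0 : ℕ) : ℤ) = {-1, 0} by decide]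
  simp [mul_add, hq0, add_comm]

theorem theta_succ (hq0 : q ≠ 0) (m : ℕ) :
    theta q (m + 1) =
      q ^ (6 * m + 7) * theta q m + q ^ (m ^ 2 + 3 * m + 2) + q ^ (m ^ 2 + 5 * m + 5) := by
  have hIcc : Icc (-((m + 1 : ℕ) : ℤ) - 1) ((m + 1 : ℕ) : ℤ) =
      insert (-(m : ℤ) - 2) (insert ((m : ℤ) + 1) (Icc (-(m : ℤ) - 1) m)) := by
    ext
    simp only [mem_Icc, mem_insert]
    omega
  have hpow (a c : ℕ) (b : ℤ) (h : (a : ℤ) + b = c) : q ^ a * q ^ b = q ^ c := by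
    rw [← zpow_natCast, ← zpow_add₀ hq0, h, zpow_natCast]
  rw [theta, theta, hIcc, sum_insert (by simp; omega), sum_insert (by simp), mul_add,
    mul_add (q ^ (3 * (m + 1) ^ 2 + 4 * (m + 1) + 1)),
    hpow _ (m ^ 2 + 3 * m + 2) _ (by push_cast; ring),
    hpow _ (m ^ 2 + 5 * m + 5) _ (by push_cast; ring)]
  ring

theorem stepSum_eq_theta (hq0 : q ≠ 0) (hodd : ∀ k : ℕ, 1 - q ^ (2 * k + 1) ≠ 0) (m : ℕ) :
    stepSum q m = (-1) ^ m * theta q m := by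
  induction m with
  | zero => rw [stepSum_zero hodd, theta_zero hq0, pow_zero, one_mul]
  | succ m ih =>
    rw [stepSum_succ hq0 hodd, ih, theta_succ hq0]
    ring

theorem lhs_summand_eq_lhsTerm (hq0 : q ≠ 0) (r n : ℕ) :
    (-1 : ℂ) ^ (n + r) * q ^ ((n + r) * (n + r + 1)) *
        (qp (q ^ (-(2 * ((n + r : ℕ) : ℤ)))) (q ^ 2) n *
            qp (q ^ (2 * (n + r) + 2)) (q ^ 2) (n + 2) / qp q (q ^ 2) (n + 1)) =
      lhsTerm q r n := by
  have hinv : q ^ (-(2 * ((n + r : ℕ) : ℤ))) = ((q ^ 2) ^ (n + r))⁻¹ := by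
    rw [zpow_neg, ← pow_mul]
    norm_cast
  have hexp : (q ^ 2) ^ (r * n + (n + 1).choose 2) = q ^ (2 * r * n + n * (n + 1)) := by
    have hchoose := Nat.add_one_mul_choose_eq n 1
    rw [Nat.choose_one_right] at hchoose
    rw [← pow_mul, mul_add, mul_comm 2 ((n + 1).choose 2), ← hchoose]
    ring
  have hrefl := qp_pow_inv_mul_pow (pow_ne_zero 2 hq0) r n
  rw [hexp, show (q ^ 2) ^ (r + 1) = q ^ (2 * r + 2) by ring] at hrefl
  have hsplit := qp_add (q ^ (2 * r + 2)) (q ^ 2) n (n + 2)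
  rw [show q ^ (2 * r + 2) * (q ^ 2) ^ n = q ^ (2 * (n + r) + 2) by ring,
    show n + (n + 2) = 2 * n + 2 by ring] at hsplit
  have hsign : ((-1 : ℂ) ^ n) ^ 2 = 1 := by rw [← pow_mul, pow_mul', neg_one_sq, one_pow]
  rw [lhsTerm, hinv, hsplit]
  linear_combination (-1) ^ (n + r) * q ^ (r * (r + 1)) *
      qp (q ^ (2 * (n + r) + 2)) (q ^ 2) (n + 2) / qp q (q ^ 2) (n + 1) * hrefl +
    (-1) ^ r * q ^ (r * (r + 1)) * qp (q ^ (2 * r + 2)) (q ^ 2) n *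
      qp (q ^ (2 * (n + r) + 2)) (q ^ 2) (n + 2) / qp q (q ^ 2) (n + 1) * hsign

theorem lhs_eq_lhsSum (hq0 : q ≠ 0) (m : ℕ) :
    (-1 : ℂ) ^ m * q ^ (m * (m + 1)) *
        ∑ n ∈ range (m + 1),
          qp (q ^ (-(2 * m : ℤ))) (q ^ 2) n * qp (q ^ (2 * m + 2)) (q ^ 2) (n + 2) /
            qp q (q ^ 2) (n + 1) = lhsSum q m := by
  rw [lhsSum, ← sum_antidiagonal_swap, mul_sum]
  refine (sum_congr rfl fun n hn => ?_).trans
    (sum_antidiagonal_eq_sum_range_succ (fun a b => lhsTerm q b a) m).symm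
  obtain ⟨r, rfl⟩ : ∃ r, m = n + r := ⟨m - n, by grind⟩
  rw [Nat.add_sub_cancel_left]
  exact lhs_summand_eq_lhsTerm hq0 r n

/-- `(-1)^m q^{m(m+1)} Σ_{n=0}^m (q^{-2m};q²)_n (q^{2m+2};q²)_{n+2}/(q;q²)_{n+1}
      = Σ_{n=0}^m (-1)^n (1-q^{4n+4}) q^{3n²+4n+1} Σ_{j=-n-1}^n q^{-j(2j+1)}`. -/
theorem stmt5 (m : ℕ) (q : ℂ) (hq : ‖q‖ < 1) (hq0 : q ≠ 0) :
    (-1 : ℂ) ^ m * q ^ (m * (m + 1)) *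
        ∑ n ∈ Finset.range (m + 1),
          qp (q ^ (-(2 * m : ℤ))) (q ^ 2) n * qp (q ^ (2 * m + 2)) (q ^ 2) (n + 2) /
            qp q (q ^ 2) (n + 1) =
      ∑ n ∈ Finset.range (m + 1),
        (-1 : ℂ) ^ n * (1 - q ^ (4 * n + 4)) * q ^ (3 * n ^ 2 + 4 * n + 1) *
          ∑ j ∈ Finset.Icc (-(n : ℤ) - 1) (n : ℤ), q ^ (-(j * (2 * j + 1))) := by
  have hodd (k : ℕ) : 1 - q ^ (2 * k + 1) ≠ 0 :=
    one_sub_pow_ne_zero_of_norm_lt_one hq (Nat.succ_ne_zero _)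
  rw [lhs_eq_lhsSum hq0, lhsSum_eq_sum_stepSum hq0]
  refine sum_congr rfl fun n _ => ?_
  rw [stepSum_eq_theta hq0 hodd, theta]
  ring
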